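/- Let d ∈ {2,4,6,8,10,12}. Let λ_1, …, λ_{12−d} be complex numbers of modulus 1 and let χ, C ∈ ℂ. Assume the eta-product identity 2χ + η_g(τ/2)/η_g(τ) − η_{-g}(τ/2)/η_{-g}(τ) + C·η_{-g}(τ) = 0 holds for all τ ∈ ℍ. For integers j ≥ 0 define F_{2j}(τ) = −Λ_2(τ/2)^j·(η_g(τ/2)/η_g(τ)) + Λ_2(τ/2+1/2)^j·(η_{-g}(τ/2)/η_{-g}(τ)) − (−2Λ_2(τ))^j·C·η_{-g}(τ), set t_g(τ) = η_g(τ)/η_g(2τ), and set G_{2j}(σ) = −Λ_2(σ)^j + (−2Λ_2(2σ))^j. Then for every integer j ≥ 0 and all τ ∈ ℍ one has F_{2j}(τ) = 2χ·(−2Λ_2(τ))^j + t_g(τ/2)·G_{2j}(τ/2) + t_g((τ+1)/2)·G_{2j}((τ+1)/2); in particular F_0(τ) = 2χ is constant. -/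

import Mathlib

noncomputable section

open Complex

/-- `2πi`. -/
def twoPiI : ℂ := 2 * Real.pi * Complex.I

/-- `q = e^{2πiτ}`. -/
def qq (τ : ℂ) : ℂ := Complex.exp (twoPiI * τ)

/-- `y = e^{2πiz}`. -/
def yy (z : ℂ) : ℂ := Complex.exp (twoPiI * z)

/-- Jacobi theta function `ϑ₁`. -/
def th1 (τ z : ℂ) : ℂ :=
  -Complex.I * ∑' n : ℤ, (-1 : ℂ) ^ n *
    Complex.exp (twoPiI * (((n : ℂ) + 1/2) * z + ((n : ℂ) + 1/2) ^ 2 / 2 * τ))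

/-- Jacobi theta function `ϑ₂`. -/
def th2 (τ z : ℂ) : ℂ :=
  ∑' n : ℤ, Complex.exp (twoPiI * (((n : ℂ) + 1/2) * z + ((n : ℂ) + 1/2) ^ 2 / 2 * τ))

/-- Jacobi theta function `ϑ₃`. -/
def th3 (τ z : ℂ) : ℂ :=
  ∑' n : ℤ, Complex.exp (twoPiI * ((n : ℂ) * z + (n : ℂ) ^ 2 / 2 * τ))

/-- Jacobi theta function `ϑ₄`. -/
def th4 (τ z : ℂ) : ℂ :=
  ∑' n : ℤ, (-1 : ℂ) ^ n * Complex.exp (twoPiI * ((n : ℂ) * z + (n : ℂ) ^ 2 / 2 * τ))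

/-- The Dedekind eta function `η(τ) = q^{1/24} ∏_{n≥1} (1 - qⁿ)`. -/
def etaF (τ : ℂ) : ℂ :=
  Complex.exp (twoPiI * τ / 24) * ∏' n : ℕ, (1 - qq τ ^ (n + 1))

/-- The quasimodular Eisenstein series `E₂(τ) = 1 - 24 ∑_{n≥1} σ₁(n) qⁿ`. -/
def E2 (τ : ℂ) : ℂ :=
  1 - 24 * ∑' n : ℕ, (∑ d ∈ Nat.divisors (n + 1), (d : ℂ)) * qq τ ^ (n + 1)

/-- `Λ_N(τ) = (N/24)(N E₂(Nτ) - E₂(τ))`. -/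
def Lam (N : ℕ) (τ : ℂ) : ℂ := (N : ℂ) / 24 * ((N : ℂ) * E2 ((N : ℂ) * τ) - E2 τ)

/-- The weak Jacobi form `φ_{0,1}`. -/
def phi01 (τ z : ℂ) : ℂ :=
  4 * (th2 τ z ^ 2 / th2 τ 0 ^ 2 + th3 τ z ^ 2 / th3 τ 0 ^ 2 + th4 τ z ^ 2 / th4 τ 0 ^ 2)

/-- The weak Jacobi form `φ_{-2,1}`. -/
def phim21 (τ z : ℂ) : ℂ := -(th1 τ z ^ 2) / etaF τ ^ 6

/-- `η_g(τ) = q·∏_{n≥1}[(1−qⁿ)^{2d}·∏_{i=1}^{12−d}(1−λᵢ⁻¹qⁿ)(1−λᵢqⁿ)]`. -/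
def etaGd (d : ℕ) (lam : Fin (12 - d) → ℂ) (τ : ℂ) : ℂ :=
  qq τ * ∏' n : ℕ, ((1 - qq τ ^ (n + 1)) ^ (2 * d) *
    ∏ i, ((1 - (lam i)⁻¹ * qq τ ^ (n + 1)) * (1 - lam i * qq τ ^ (n + 1))))

/-- `η_{-g}(τ) = q·∏_{n≥1}[(1+qⁿ)^{2d}·∏_{i=1}^{12−d}(1+λᵢ⁻¹qⁿ)(1+λᵢqⁿ)]`. -/
def etaGdneg (d : ℕ) (lam : Fin (12 - d) → ℂ) (τ : ℂ) : ℂ :=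
  qq τ * ∏' n : ℕ, ((1 + qq τ ^ (n + 1)) ^ (2 * d) *
    ∏ i, ((1 + (lam i)⁻¹ * qq τ ^ (n + 1)) * (1 + lam i * qq τ ^ (n + 1))))

/-- The twining genus `Φ^{(ℓ)} = φ_g^{(ℓ)}` with `ℓ = d/2 + 1`, built from `η_g`, `η_{-g}`,
the theta quotients, and the constants `C = C_{-g}` and `D = D_g^{(ℓ)}`. -/
def PhiL (d : ℕ) (lam : Fin (12 - d) → ℂ) (C D : ℂ) (τ z : ℂ) : ℂ :=
  -(1 / 2) * ((th4 τ z ^ d / th4 τ 0 ^ d) * (etaGd d lam (τ / 2) / etaGd d lam τ)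
            - (th3 τ z ^ d / th3 τ 0 ^ d) * (etaGdneg d lam (τ / 2) / etaGdneg d lam τ))
  + 1 / 2 * ((-1 : ℂ) ^ (d / 2 + 1) * (th1 τ z ^ d / etaF τ ^ (3 * d)) * D * etaGd d lam τ
           - (th2 τ z ^ d / th2 τ 0 ^ d) * C * etaGdneg d lam τ)

/-- `F_{2j} = F_{2j,g}`, as in equation (10.4). -/
def F2j (d : ℕ) (lam : Fin (12 - d) → ℂ) (C : ℂ) (j : ℕ) (τ : ℂ) : ℂ :=
  -(Lam 2 (τ / 2)) ^ j * (etaGd d lam (τ / 2) / etaGd d lam τ)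
  + (Lam 2 (τ / 2 + 1 / 2)) ^ j * (etaGdneg d lam (τ / 2) / etaGdneg d lam τ)
  - (-2 * Lam 2 τ) ^ j * C * etaGdneg d lam τ

/-- `t_g(τ) = η_g(τ)/η_g(2τ)`. -/
def tgd (d : ℕ) (lam : Fin (12 - d) → ℂ) (τ : ℂ) : ℂ := etaGd d lam τ / etaGd d lam (2 * τ)

/-- `G_{2j}(σ) = −Λ₂(σ)ʲ + (−2Λ₂(2σ))ʲ`. -/
def G2j (j : ℕ) (σ : ℂ) : ℂ := -(Lam 2 σ) ^ j + (-2 * Lam 2 (2 * σ)) ^ j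

/-! Write `p = e^{πiτ}`. Then `η_g` and `η_{-g}` at `τ/2`, `(τ+1)/2` and `τ` are, up to powers
of `p`, products of the single factor `F(x) = (1+x)^{2d} ∏ᵢ (1+λᵢ⁻¹x)(1+λᵢx)` over the points
`±pⁿ` resp. `±p²ⁿ`. Splitting the products at `τ/2` and `(τ+1)/2` by the parity of `n`, the odd
part of `η_g((τ+1)/2)` is that of `η_{-g}(τ/2)`, while the even parts are `η_g(τ)` and `η_{-g}(τ)`.
This gives `η_g((τ+1)/2) η_{-g}(τ) = −η_{-g}(τ/2) η_g(τ)`, i.e.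
`t_g((τ+1)/2) = −η_{-g}(τ/2)/η_{-g}(τ)` (the eta products do not vanish since `|λᵢ| = 1`).
As `Λ₂` is `1`-periodic, the claimed formula is then the eta-product identity multiplied by
`(−2Λ₂(τ))ʲ`. -/

section LinearFactor

variable {c q : ℂ}

lemma summable_norm_mul_pow (hq : ‖q‖ < 1) : Summable fun n : ℕ => ‖c * q ^ n‖ :=
  ((summable_geometric_of_lt_one (norm_nonneg q) hq).mul_left ‖c‖).congr fun n => by
    rw [norm_mul, norm_pow]

lemma multipliable_one_add_mul_pow (hq : ‖q‖ < 1) : Multipliable fun n : ℕ => 1 + c * q ^ n :=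
  multipliable_one_add_of_summable (summable_norm_mul_pow hq)

lemma tprod_one_add_mul_pow_ne_zero (hc : ‖c‖ < 1) (hq : ‖q‖ < 1) :
    ∏' n : ℕ, (1 + c * q ^ n) ≠ 0 := by
  refine tprod_one_add_ne_zero_of_summable (fun n h => ?_) (summable_norm_mul_pow hq)
  have hlt : ‖c * q ^ n‖ < 1 := by
    rw [norm_mul, norm_pow]
    exact mul_lt_one_of_nonneg_of_lt_one_left (norm_nonneg c) hc
      (pow_le_one₀ (norm_nonneg q) hq.le)
  rw [eq_neg_of_add_eq_zero_right h, norm_neg, norm_one] at hlt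
  exact hlt.false

end LinearFactor

lemma tprod_comp_mul_pow_eq_even_mul_odd {F : ℂ → ℂ} {z q : ℂ}
    (he : Multipliable fun k : ℕ => F (z * (q ^ 2) ^ k))
    (ho : Multipliable fun k : ℕ => F (z * q * (q ^ 2) ^ k)) :
    ∏' n : ℕ, F (z * q ^ n) =
      (∏' k : ℕ, F (z * (q ^ 2) ^ k)) * ∏' k : ℕ, F (z * q * (q ^ 2) ^ k) := by
  have hev : ∀ k : ℕ, z * q ^ (2 * k) = z * (q ^ 2) ^ k := fun k => by ring
  have hod : ∀ k : ℕ, z * q ^ (2 * k + 1) = z * q * (q ^ 2) ^ k := fun k => by ring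
  rw [← tprod_even_mul_odd (f := fun n => F (z * q ^ n)) (by simpa only [hev] using he)
    (by simpa only [hod] using ho)]
  simp only [hev, hod]

/-- The factor of `η_{-g}` at `qⁿ` is `etaFactor (2 * d) lam (qⁿ)`, that of `η_g` is
`etaFactor (2 * d) lam (-qⁿ)`. -/
def etaFactor {ι : Type*} [Fintype ι] (k : ℕ) (lam : ι → ℂ) (x : ℂ) : ℂ :=
  (1 + x) ^ k * ∏ i, ((1 + (lam i)⁻¹ * x) * (1 + lam i * x))

section EtaFactor

variable {ι : Type*} [Fintype ι] (k : ℕ) {lam : ι → ℂ} {z q : ℂ}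

lemma multipliable_one_add_mul_mul_pow (a : ℂ) (hq : ‖q‖ < 1) :
    Multipliable fun n : ℕ => 1 + a * (z * q ^ n) :=
  (multipliable_one_add_mul_pow (c := a * z) hq).congr fun n => by ring

lemma multipliable_etaFactor (hq : ‖q‖ < 1) :
    Multipliable fun n : ℕ => etaFactor k lam (z * q ^ n) := by
  have hlin := fun a : ℂ => multipliable_one_add_mul_mul_pow (z := z) a hq
  have hpow : Multipliable fun n : ℕ => (1 + z * q ^ n) ^ k := by
    simpa only [one_mul] using (hlin 1).pow k
  exact hpow.mul (multipliable_prod fun i _ => (hlin (lam i)⁻¹).mul (hlin (lam i)))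

lemma tprod_etaFactor (hq : ‖q‖ < 1) :
    ∏' n : ℕ, etaFactor k lam (z * q ^ n) =
      (∏' n : ℕ, (1 + z * q ^ n)) ^ k * ∏ i, ((∏' n : ℕ, (1 + (lam i)⁻¹ * (z * q ^ n))) *
        ∏' n : ℕ, (1 + lam i * (z * q ^ n))) := by
  have hlin := fun a : ℂ => multipliable_one_add_mul_mul_pow (z := z) a hq
  have hone : Multipliable fun n : ℕ => 1 + z * q ^ n := by simpa only [one_mul] using hlin 1
  have hpair (i : ι) := (hlin (lam i)⁻¹).mul (hlin (lam i))
  simp only [etaFactor]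
  rw [(hone.pow k).tprod_mul (multipliable_prod fun i _ => hpair i), hone.tprod_pow,
    Multipliable.tprod_finsetProd fun i _ => hpair i]
  exact congrArg _ (Finset.prod_congr rfl fun i _ => (hlin _).tprod_mul (hlin _))

lemma tprod_etaFactor_ne_zero (hlam : ∀ i, ‖lam i‖ = 1) (hz : ‖z‖ < 1) (hq : ‖q‖ < 1) :
    ∏' n : ℕ, etaFactor k lam (z * q ^ n) ≠ 0 := by
  have hlin : ∀ a : ℂ, ‖a‖ = 1 → ∏' n : ℕ, (1 + a * (z * q ^ n)) ≠ 0 := fun a ha => by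
    simp_rw [← mul_assoc]
    exact tprod_one_add_mul_pow_ne_zero (by rwa [norm_mul, ha, one_mul]) hq
  rw [tprod_etaFactor k hq]
  refine mul_ne_zero (pow_ne_zero _ (by simpa only [one_mul] using hlin 1 norm_one))
    (Finset.prod_ne_zero_iff.2 fun i _ => ?_)
  exact mul_ne_zero (hlin _ (by rw [norm_inv, hlam i, inv_one])) (hlin _ (hlam i))

lemma tprod_etaFactor_eq_even_mul_odd (hq : ‖q‖ < 1) :
    ∏' n : ℕ, etaFactor k lam (z * q ^ n) =
      (∏' n : ℕ, etaFactor k lam (z * (q ^ 2) ^ n)) *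
        ∏' n : ℕ, etaFactor k lam (z * q * (q ^ 2) ^ n) := by
  have hq2 : ‖q ^ 2‖ < 1 := by
    rw [norm_pow]
    exact pow_lt_one₀ (norm_nonneg q) hq two_ne_zero
  exact tprod_comp_mul_pow_eq_even_mul_odd (multipliable_etaFactor k hq2)
    (multipliable_etaFactor k hq2)

end EtaFactor

lemma qq_ne_zero (τ : ℂ) : qq τ ≠ 0 := Complex.exp_ne_zero _

lemma norm_qq_lt_one {τ : ℂ} (hτ : 0 < τ.im) : ‖qq τ‖ < 1 := by
  have hre : (twoPiI * τ).re = -(2 * Real.pi * τ.im) := by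
    simp [twoPiI, Complex.mul_re, Complex.mul_im]
  rw [qq, Complex.norm_exp, Real.exp_lt_one_iff, hre, neg_lt_zero]
  positivity

lemma qq_add_natCast (τ : ℂ) (n : ℕ) : qq (τ + n) = qq τ := by
  rw [qq, qq, mul_add, Complex.exp_add, twoPiI, mul_comm _ (n : ℂ),
    Complex.exp_nat_mul_two_pi_mul_I, mul_one]

lemma qq_half_sq (τ : ℂ) : qq (τ / 2) ^ 2 = qq τ := by
  rw [qq, qq, ← Complex.exp_nat_mul]
  congr 1
  push_cast
  ring

lemma qq_add_one_div_two (τ : ℂ) : qq ((τ + 1) / 2) = -qq (τ / 2) := by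
  rw [qq, qq, show twoPiI * ((τ + 1) / 2) = twoPiI * (τ / 2) + Real.pi * I by
    rw [twoPiI]; ring, Complex.exp_add, Complex.exp_pi_mul_I, mul_neg_one]

lemma qq_add_one (τ : ℂ) : qq (τ + 1) = qq τ := by
  exact_mod_cast qq_add_natCast τ 1

lemma E2_add_natCast (τ : ℂ) (n : ℕ) : E2 (τ + n) = E2 τ := by
  simp only [E2, qq_add_natCast]

lemma Lam_add_one (N : ℕ) (τ : ℂ) : Lam N (τ + 1) = Lam N τ := by
  rw [Lam, Lam, mul_add, mul_one, E2_add_natCast, show τ + 1 = τ + (1 : ℕ) by norm_num,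
    E2_add_natCast]

section Eta

variable (d : ℕ) (lam : Fin (12 - d) → ℂ)

lemma etaGd_eq_tprod_etaFactor (τ : ℂ) :
    etaGd d lam τ = qq τ * ∏' n : ℕ, etaFactor (2 * d) lam (-qq τ * qq τ ^ n) := by
  unfold etaGd etaFactor
  congr 1
  refine tprod_congr fun n => ?_
  congr 1
  · ring
  · exact Finset.prod_congr rfl fun i _ => by ring

lemma etaGdneg_eq_tprod_etaFactor (τ : ℂ) :
    etaGdneg d lam τ = qq τ * ∏' n : ℕ, etaFactor (2 * d) lam (qq τ * qq τ ^ n) := by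
  unfold etaGdneg etaFactor
  congr 1
  refine tprod_congr fun n => ?_
  congr 1
  · ring
  · exact Finset.prod_congr rfl fun i _ => by ring

lemma etaGd_add_one (τ : ℂ) : etaGd d lam (τ + 1) = etaGd d lam τ := by
  simp only [etaGd, qq_add_one]

/-- With `p = qq (τ / 2)`, both sides equal `-p³ A B C`, where `A`, `B`, `C` are the products of
the factor over `p·p²ⁿ`, `p²·p²ⁿ` and `-p²·p²ⁿ`. -/
lemma etaGd_add_one_div_two_mul_etaGdneg {τ : ℂ} (hτ : 0 < τ.im) :
    etaGd d lam ((τ + 1) / 2) * etaGdneg d lam τ =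
      -(etaGdneg d lam (τ / 2) * etaGd d lam τ) := by
  have hp : ‖qq (τ / 2)‖ < 1 := norm_qq_lt_one (by simpa using hτ)
  rw [etaGd_eq_tprod_etaFactor, etaGdneg_eq_tprod_etaFactor, etaGdneg_eq_tprod_etaFactor,
    etaGd_eq_tprod_etaFactor, qq_add_one_div_two, ← qq_half_sq τ, neg_neg,
    tprod_etaFactor_eq_even_mul_odd _ (by rwa [norm_neg]),
    tprod_etaFactor_eq_even_mul_odd _ hp, neg_sq, mul_neg, ← sq]
  ring

variable {d lam} (hlam : ∀ i, ‖lam i‖ = 1)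
include hlam

lemma etaGd_ne_zero {τ : ℂ} (hτ : 0 < τ.im) : etaGd d lam τ ≠ 0 := by
  rw [etaGd_eq_tprod_etaFactor]
  exact mul_ne_zero (qq_ne_zero τ) (tprod_etaFactor_ne_zero _ hlam
    (by rw [norm_neg]; exact norm_qq_lt_one hτ) (norm_qq_lt_one hτ))

lemma etaGdneg_ne_zero {τ : ℂ} (hτ : 0 < τ.im) : etaGdneg d lam τ ≠ 0 := by
  rw [etaGdneg_eq_tprod_etaFactor]
  exact mul_ne_zero (qq_ne_zero τ)
    (tprod_etaFactor_ne_zero _ hlam (norm_qq_lt_one hτ) (norm_qq_lt_one hτ))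

end Eta

lemma tgd_half (d : ℕ) (lam : Fin (12 - d) → ℂ) (τ : ℂ) :
    tgd d lam (τ / 2) = etaGd d lam (τ / 2) / etaGd d lam τ := by
  rw [tgd, mul_div_cancel₀ τ two_ne_zero]

lemma tgd_add_one_div_two {d : ℕ} {lam : Fin (12 - d) → ℂ} (hlam : ∀ i, ‖lam i‖ = 1) {τ : ℂ}
    (hτ : 0 < τ.im) :
    tgd d lam ((τ + 1) / 2) = -(etaGdneg d lam (τ / 2) / etaGdneg d lam τ) := by
  rw [tgd, mul_div_cancel₀ _ two_ne_zero, etaGd_add_one, ← neg_div,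
    div_eq_div_iff (etaGd_ne_zero hlam hτ) (etaGdneg_ne_zero hlam hτ),
    etaGd_add_one_div_two_mul_etaGdneg d lam hτ, neg_mul]

lemma F2j_eq_of_etaIdentity {d : ℕ} {lam : Fin (12 - d) → ℂ} (hlam : ∀ i, ‖lam i‖ = 1)
    {chi C τ : ℂ} (hτ : 0 < τ.im)
    (hid : 2 * chi + etaGd d lam (τ / 2) / etaGd d lam τ
      - etaGdneg d lam (τ / 2) / etaGdneg d lam τ + C * etaGdneg d lam τ = 0) (j : ℕ) :
    F2j d lam C j τ = 2 * chi * (-2 * Lam 2 τ) ^ j + tgd d lam (τ / 2) * G2j j (τ / 2)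
      + tgd d lam ((τ + 1) / 2) * G2j j ((τ + 1) / 2) := by
  have hshift : (τ + 1) / 2 = τ / 2 + 1 / 2 := by ring
  rw [F2j, G2j, G2j, tgd_half, tgd_add_one_div_two hlam hτ, mul_div_cancel₀ τ two_ne_zero,
    mul_div_cancel₀ _ two_ne_zero, Lam_add_one, hshift]
  linear_combination (-(-2 * Lam 2 τ) ^ j) * hid

theorem F2j_Hecke_expression_general (d : ℕ)
    (lam : Fin (12 - d) → ℂ) (hlam : ∀ i, ‖lam i‖ = 1) (chi C : ℂ)
    (hid : ∀ τ : ℂ, 0 < τ.im →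
      2 * chi + etaGd d lam (τ / 2) / etaGd d lam τ
        - etaGdneg d lam (τ / 2) / etaGdneg d lam τ + C * etaGdneg d lam τ = 0) :
    (∀ j : ℕ, ∀ τ : ℂ, 0 < τ.im →
      F2j d lam C j τ
        = 2 * chi * (-2 * Lam 2 τ) ^ j
          + tgd d lam (τ / 2) * G2j j (τ / 2)
          + tgd d lam ((τ + 1) / 2) * G2j j ((τ + 1) / 2)) ∧
    (∀ τ : ℂ, 0 < τ.im → F2j d lam C 0 τ = 2 * chi) :=
  ⟨fun j τ hτ => F2j_eq_of_etaIdentity hlam hτ (hid τ hτ) j,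
    fun τ hτ => by simpa [G2j] using F2j_eq_of_etaIdentity hlam hτ (hid τ hτ) 0⟩

/-- Assuming the eta-product identity, each `F_{2j}` is a Hecke-type combination of `t_g`
and `G_{2j}`; in particular `F₀ = 2χ` is constant. -/
theorem F2j_Hecke_expression (d : ℕ) (hd : d ∈ ({2, 4, 6, 8, 10, 12} : Set ℕ))
    (lam : Fin (12 - d) → ℂ) (hlam : ∀ i, ‖lam i‖ = 1) (chi C : ℂ)
    (hid : ∀ τ : ℂ, 0 < τ.im →
      2 * chi + etaGd d lam (τ / 2) / etaGd d lam τ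
        - etaGdneg d lam (τ / 2) / etaGdneg d lam τ + C * etaGdneg d lam τ = 0) :
    (∀ j : ℕ, ∀ τ : ℂ, 0 < τ.im →
      F2j d lam C j τ
        = 2 * chi * (-2 * Lam 2 τ) ^ j
          + tgd d lam (τ / 2) * G2j j (τ / 2)
          + tgd d lam ((τ + 1) / 2) * G2j j ((τ + 1) / 2)) ∧
    (∀ τ : ℂ, 0 < τ.im → F2j d lam C 0 τ = 2 * chi) :=
  F2j_Hecke_expression_general d lam hlam chi C hid
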